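/- arXiv:2204.09035 — 2 statements merged into one kernel-verified Lean document; each statement's English description precedes it below -/
import Mathlib

section
/- Let G be a finite simple graph, S, T ⊆ V(G), and let X = ∂(S) ∪ (T ∩ S), where ∂(S) is the set of vertices of S having a neighbor in V(G) ∖ S. Let H be a finite simple graph with V(H) ∩ V(G) = X such that B_H(X) = B_{G[S]}(X). Let G' be the graph obtained from G by replacing G[S] by H, i.e., V(G') = (V(G) ∖ (S ∖ X)) ∪ V(H) and E(G') = {e ∈ E(G) : not both endpoints of e lie in S} ∪ E(H). Then B_G(T) = B_{G'}(T). -/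
/-!
Cutting along `X`, a proper 2-coloring of either graph restricts to proper 2-colorings of its two
pieces: `G[S]` resp. `H` inside, and the edges of `G` not inside `S` outside. The pieces only meet
in `X`, which contains every vertex of `S` with an outside neighbour, and `B_H(X) = B_{G[S]}(X)`
says exactly that the inside piece can be exchanged for the other one without changing the colors
on `X`. Gluing the new inside coloring to the old outside one gives a proper coloring of the other
graph, with the same colors on `T` because `T ∩ S ⊆ X`.
-/

open scoped Classical

/-- A finite simple graph on a subset of an ambient vertex type `U`. -/
structure FinGraph (U : Type) where
  verts : Finset U
  G : SimpleGraph U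
  support : ∀ ⦃u v : U⦄, G.Adj u v → u ∈ verts ∧ v ∈ verts

/-- The restriction (induced subgraph) of a `SimpleGraph` to a finite vertex set. -/
def SimpleGraph.restrictTo {U : Type} (G : SimpleGraph U) (s : Finset U) : SimpleGraph U where
  Adj u v := G.Adj u v ∧ u ∈ s ∧ v ∈ s
  symm := ⟨fun u v h => ⟨h.1.symm, h.2.2, h.2.1⟩⟩
  loopless := ⟨fun u h => G.loopless.irrefl u h.1⟩

/-- The boundary `∂(S)` of `S` in `G`: vertices of `S` with a neighbor outside `S`. -/
noncomputable def FinGraph.bdry {U : Type} [DecidableEq U] (G : FinGraph U) (S : Finset U) :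
    Finset U :=
  S.filter fun v => ∃ u, G.G.Adj v u ∧ u ∉ S

/-- The set of bipartitions `B_G(S)`: subsets `S' ⊆ S` for which some proper 2-coloring of `G`
colors all of `S'` with `true` and all of `S ∖ S'` with `false`. -/
def Bip {U : Type} [DecidableEq U] (G : SimpleGraph U) (S : Finset U) : Set (Finset U) :=
  {S' | S' ⊆ S ∧ ∃ c : U → Bool, (∀ ⦃u v⦄, G.Adj u v → c u ≠ c v) ∧
    (∀ v ∈ S', c v = true) ∧ ∀ v ∈ S \ S', c v = false}

namespace SimpleGraph

variable {U : Type}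

lemma restrictTo_le (G : SimpleGraph U) (s : Finset U) : G.restrictTo s ≤ G :=
  fun _ _ h => h.1

lemma support_restrictTo_subset (G : SimpleGraph U) (s : Finset U) :
    (G.restrictTo s).support ⊆ s :=
  fun _ ⟨_, h⟩ => h.2.1

lemma exists_coloring_sup_eqOn {α : Type*} {K₁ K₂ : SimpleGraph U} {V : Set U}
    (hV : K₁.support ⊆ V) (C₁ : K₁.Coloring α) (C₂ : K₂.Coloring α)
    (hagree : ∀ v ∈ V, v ∈ K₂.support → C₁ v = C₂ v) :
    ∃ C : (K₁ ⊔ K₂).Coloring α, Set.EqOn C C₁ V ∧ Set.EqOn C C₂ Vᶜ := by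
  have hC₂ : ∀ ⦃u⦄, u ∈ K₂.support → V.piecewise C₁ C₂ u = C₂ u := by
    intro u hu
    by_cases huV : u ∈ V
    · rw [Set.piecewise_eq_of_mem _ _ _ huV, hagree u huV hu]
    · exact Set.piecewise_eq_of_notMem _ _ _ huV
  refine ⟨Coloring.mk (V.piecewise C₁ C₂) fun {u w} huw => ?_,
    fun u hu => Set.piecewise_eq_of_mem _ _ _ hu,
    fun u hu => Set.piecewise_eq_of_notMem _ _ _ hu⟩
  rcases huw with h₁ | h₂
  · rw [Set.piecewise_eq_of_mem _ _ _ (hV h₁.left_mem_support),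
      Set.piecewise_eq_of_mem _ _ _ (hV h₁.right_mem_support)]
    exact C₁.valid h₁
  · rw [hC₂ h₂.left_mem_support, hC₂ h₂.right_mem_support]
    exact C₂.valid h₂

end SimpleGraph

section Bip

variable {U : Type} [DecidableEq U]

lemma mem_Bip_iff {G : SimpleGraph U} {S S' : Finset U} :
    S' ∈ Bip G S ↔ ∃ C : G.Coloring Bool, S.filter (fun v => C v = true) = S' := by
  constructor
  · rintro ⟨hS', c, hc, hc1, hc0⟩
    refine ⟨SimpleGraph.Coloring.mk c fun h => hc h, Finset.ext fun v => ?_⟩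
    rw [Finset.mem_filter]
    exact ⟨fun ⟨hv, hcv⟩ => by_contra fun h =>
      Bool.false_ne_true ((hc0 v (Finset.mem_sdiff.2 ⟨hv, h⟩)).symm.trans hcv),
      fun hv => ⟨hS' hv, hc1 v hv⟩⟩
  · rintro ⟨C, rfl⟩
    refine ⟨Finset.filter_subset _ _, C, fun _ _ h => C.valid h,
      fun v hv => (Finset.mem_filter.1 hv).2, fun v hv => ?_⟩
    simp only [Finset.mem_sdiff, Finset.mem_filter, not_and, Bool.not_eq_true] at hv
    exact hv.2 hv.1

lemma exists_coloring_eqOn_of_Bip_subset {G H : SimpleGraph U} {X : Finset U}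
    (h : Bip G X ⊆ Bip H X) (C : G.Coloring Bool) :
    ∃ D : H.Coloring Bool, ∀ v ∈ X, D v = C v := by
  obtain ⟨D, hD⟩ := mem_Bip_iff.1 (h (mem_Bip_iff.2 ⟨C, rfl⟩))
  refine ⟨D, fun v hv => ?_⟩
  have := congrArg (v ∈ ·) hD
  simp only [Finset.mem_filter, hv, true_and, eq_iff_iff] at this
  exact Bool.eq_iff_iff.2 this

lemma Bip_subset_Bip_of_forall_coloring {G G' : SimpleGraph U} {T : Finset U}
    (h : ∀ C : G.Coloring Bool, ∃ C' : G'.Coloring Bool, ∀ v ∈ T, C' v = C v) :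
    Bip G T ⊆ Bip G' T := by
  intro S' hS'
  obtain ⟨C, rfl⟩ := mem_Bip_iff.1 hS'
  obtain ⟨C', hC'⟩ := h C
  exact mem_Bip_iff.2 ⟨C', Finset.filter_congr fun v hv => by rw [hC' v hv]⟩

end Bip

namespace FinGraph

variable {U : Type}

lemma support_subset_verts (G : FinGraph U) : G.G.support ⊆ G.verts :=
  fun _ ⟨_, h⟩ => (G.support h).1

lemma mem_bdry_of_mem_support_sdiff [DecidableEq U] (G : FinGraph U) {S : Finset U} {v : U}
    (hv : v ∈ S) (hsupp : v ∈ (G.G \ G.G.restrictTo S).support) : v ∈ G.bdry S := by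
  obtain ⟨u, hadj, hnot⟩ := hsupp
  exact Finset.mem_filter.2 ⟨hv, u, hadj, fun hu => hnot ⟨hadj, hv, hu⟩⟩

end FinGraph

theorem replace_subgraph_keeps_bipartitions_general {U : Type} [DecidableEq U]
    (G : FinGraph U) (S T : Finset U) (hT : T ⊆ G.verts)
    (H : FinGraph U)
    (hHG : H.verts ∩ G.verts = G.bdry S ∪ (T ∩ S))
    (hBip : Bip H.G (G.bdry S ∪ (T ∩ S)) =
      Bip (G.G.restrictTo S) (G.bdry S ∪ (T ∩ S)))
    (G' : FinGraph U)
    (hG'adj : ∀ a b : U, G'.G.Adj a b ↔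
      ((G.G.Adj a b ∧ ¬(a ∈ S ∧ b ∈ S)) ∨ H.G.Adj a b)) :
    Bip G.G T = Bip G'.G T := by
  set X := G.bdry S ∪ (T ∩ S)
  set outside := G.G \ G.G.restrictTo S
  have hG' : G'.G = outside ⊔ H.G := by
    ext a b
    rw [hG'adj, SimpleGraph.sup_adj, SimpleGraph.sdiff_adj]
    simp only [SimpleGraph.restrictTo]
    tauto
  have hG : G.G = G.G.restrictTo S ⊔ outside :=
    (sup_sdiff_cancel_right (G.G.restrictTo_le S)).symm
  have hTS : ∀ v ∈ T, v ∈ S → v ∈ X := fun v hvT hvS =>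
    Finset.mem_union_right _ (Finset.mem_inter.2 ⟨hvT, hvS⟩)
  apply Set.Subset.antisymm
  · refine Bip_subset_Bip_of_forall_coloring fun C => ?_
    obtain ⟨D, hD⟩ := exists_coloring_eqOn_of_Bip_subset (X := X) hBip.ge
      (C.comp (.ofLE (G.G.restrictTo_le S)))
    obtain ⟨C', hC', -⟩ := SimpleGraph.exists_coloring_sup_eqOn G.support_subset_verts C D
      fun v hvG hvH =>
        (hD v <| hHG ▸ Finset.mem_inter.2 ⟨H.support_subset_verts hvH, hvG⟩).symm
    have hG'le : G'.G ≤ G.G ⊔ H.G := hG'.trans_le (sup_le_sup_right sdiff_le _)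
    exact ⟨C'.comp (.ofLE hG'le), fun v hv => hC' (hT hv)⟩
  · refine Bip_subset_Bip_of_forall_coloring fun C => ?_
    have hout : outside ≤ G'.G := le_sup_left.trans hG'.ge
    obtain ⟨D, hD⟩ := exists_coloring_eqOn_of_Bip_subset (X := X) hBip.le
      (C.comp (.ofLE (le_sup_right.trans hG'.ge)))
    obtain ⟨C', hC'S, hC'out⟩ := SimpleGraph.exists_coloring_sup_eqOn
      (G.G.support_restrictTo_subset S) D (C.comp (.ofLE hout))
      fun v hvS hv => hD v (Finset.mem_union_left _ (G.mem_bdry_of_mem_support_sdiff hvS hv))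
    refine ⟨C'.comp (.ofLE hG.le), fun v hv => ?_⟩
    by_cases hvS : v ∈ S
    · exact (hC'S hvS).trans (hD v (hTS v hv hvS))
    · exact hC'out hvS

/-- for `X = ∂(S) ∪ (T ∩ S)`, if `H` (with `V(H) ∩ V(G) = X`) satisfies
`B_H(X) = B_{G[S]}(X)` and `G'` is obtained from `G` by replacing `G[S]` by `H`, then
`B_G(T) = B_{G'}(T)`. -/
theorem replace_subgraph_keeps_bipartitions {U : Type} [DecidableEq U]
    (G : FinGraph U) (S T : Finset U) (hS : S ⊆ G.verts) (hT : T ⊆ G.verts)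
    (H : FinGraph U)
    (hHG : H.verts ∩ G.verts = G.bdry S ∪ (T ∩ S))
    (hBip : Bip H.G (G.bdry S ∪ (T ∩ S)) =
      Bip (G.G.restrictTo S) (G.bdry S ∪ (T ∩ S)))
    (G' : FinGraph U)
    (hG'verts : G'.verts = (G.verts \ (S \ (G.bdry S ∪ (T ∩ S)))) ∪ H.verts)
    (hG'adj : ∀ a b : U, G'.G.Adj a b ↔
      ((G.G.Adj a b ∧ ¬(a ∈ S ∧ b ∈ S)) ∨ H.G.Adj a b)) :
    Bip G.G T = Bip G'.G T :=
  replace_subgraph_keeps_bipartitions_general G S T hT H hHG hBip G' hG'adj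
end

section
/- Let G be a finite simple graph with nonnegative edge weights, and for vertices u, v let d_G(u,v) denote the minimum total weight of a u–v path in G (∞ if u and v are not connected). Let 𝓡 be a finite family of subsets of V(G) such that every vertex lies in some region and every edge of G has both endpoints in a common region; for R ∈ 𝓡 let ∂(R) = R ∩ ⋃_{R' ∈ 𝓡, R' ≠ R} R', let M ⊆ V(G) be a set of marked vertices, and set ∇(R) = ∂(R) ∪ (M ∩ R). Let A be a weighted simple graph on the vertex set ⋃_{R ∈ 𝓡} ∇(R) with weight function w_A such that: (a) every edge uv of A has both endpoints in ∇(R) for some R ∈ 𝓡, and w_A(uv) ≥ d_G(u,v); and (b) there is a constant c ≥ 1 such that for every R ∈ 𝓡 and all u, v ∈ ∇(R): d_A(u,v) ≤ c · d_{G[R]}(u,v), where G[R] is the induced (weighted) subgraph on R. Then for all s, t ∈ ⋃_{R ∈ 𝓡} ∇(R): d_G(s,t) ≤ d_A(s,t) ≤ c · d_G(s,t). -/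
open scoped Classical ENNReal

/-- The boundary `∂(R)` of a region `R` with respect to a family `𝓡` of regions. -/
noncomputable def bdryIn {U : Type} [DecidableEq U] (𝓡 : Finset (Finset U)) (R : Finset U) :
    Finset U :=
  R.filter fun v => ∃ R' ∈ 𝓡, R' ≠ R ∧ v ∈ R'

/-- The weighted distance `d_G(u,v) ∈ [0,∞]`: the infimum of the total weight of a
`u`–`v` walk (`∞` if `u` and `v` are not connected). -/
noncomputable def wdist {U : Type} (G : SimpleGraph U) (w : Sym2 U → ℝ) (u v : U) : ℝ≥0∞ :=
  ⨅ p : G.Walk u v, (p.edges.map fun e => ENNReal.ofReal (w e)).sum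

/-!
The lower bound holds because every edge of `A` is at least as long as the corresponding
`G`-distance. For the upper bound, follow a `G`-walk from `s` to `t` region by region: while it
stays inside a region `R` entered at `x ∈ ∇(R)`, its weight bounds `d_{G[R]}(x, ·)`; when an edge
`yz` leaves `R`, it lies in another region, so `y ∈ ∂(R)` is a vertex of `A`, and hypothesis (b)
gives `d_A(x, y) ≤ c · d_{G[R]}(x, y)`. Summing these pieces with the triangle inequality in `A`
yields `d_A(s, t) ≤ c · w(walk)`.
-/

namespace SimpleGraph

variable {U : Type} {G H : SimpleGraph U} {w w' : Sym2 U → ℝ}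

noncomputable def Walk.weight (w : Sym2 U → ℝ) {u v : U} (p : G.Walk u v) : ℝ≥0∞ :=
  (p.edges.map fun e => ENNReal.ofReal (w e)).sum

@[simp]
lemma Walk.weight_nil {u : U} : (Walk.nil : G.Walk u u).weight w = 0 := rfl

@[simp]
lemma Walk.weight_cons {u v x : U} (h : G.Adj u v) (p : G.Walk v x) :
    (Walk.cons h p).weight w = ENNReal.ofReal (w s(u, v)) + p.weight w := by
  simp [Walk.weight]

lemma Walk.weight_append {u v x : U} (p : G.Walk u v) (q : G.Walk v x) :
    (p.append q).weight w = p.weight w + q.weight w := by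
  simp [Walk.weight]

lemma wdist_le_weight {u v : U} (p : G.Walk u v) : wdist G w u v ≤ p.weight w :=
  iInf_le _ p

@[simp]
lemma wdist_self (u : U) : wdist G w u u = 0 :=
  nonpos_iff_eq_zero.1 (wdist_le_weight Walk.nil)

lemma wdist_le_of_adj {u v : U} (h : G.Adj u v) :
    wdist G w u v ≤ ENNReal.ofReal (w s(u, v)) := by
  simpa using wdist_le_weight (w := w) (Walk.cons h Walk.nil)

lemma wdist_triangle (u v x : U) : wdist G w u x ≤ wdist G w u v + wdist G w v x := by
  simp only [wdist, ENNReal.iInf_add, ENNReal.add_iInf]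
  exact le_iInf₂ fun q p => (wdist_le_weight (p.append q)).trans_eq (Walk.weight_append p q)

lemma wdist_le_wdist_of_forall_adj
    (h : ∀ ⦃u v⦄, H.Adj u v → wdist G w u v ≤ ENNReal.ofReal (w' s(u, v))) (u v : U) :
    wdist G w u v ≤ wdist H w' u v := by
  refine le_iInf fun p => ?_
  induction p with
  | nil => simp
  | cons hadj p ih => exact (wdist_triangle _ _ _).trans (add_le_add (h hadj) ih)

lemma le_mul_wdist_of_forall_walk {d c : ℝ≥0∞} (hc₀ : c ≠ 0) (hc : c ≠ ⊤) {u v : U}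
    (h : ∀ p : G.Walk u v, d ≤ c * p.weight w) : d ≤ c * wdist G w u v := by
  rw [wdist, ENNReal.mul_iInf_of_ne hc₀ hc]
  exact le_iInf h

end SimpleGraph

open SimpleGraph

section Regions

variable {U : Type} [DecidableEq U] {𝓡 : Finset (Finset U)} {M R R' : Finset U} {v : U}

/-- The paper's `∇(R) = ∂(R) ∪ (M ∩ R)`. -/
noncomputable def nablaIn (𝓡 : Finset (Finset U)) (M R : Finset U) : Finset U :=
  bdryIn 𝓡 R ∪ (M ∩ R)

lemma mem_bdryIn_of_mem_of_ne (hR' : R' ∈ 𝓡) (hne : R' ≠ R) (hvR : v ∈ R) (hvR' : v ∈ R') :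
    v ∈ bdryIn 𝓡 R :=
  Finset.mem_filter.2 ⟨hvR, R', hR', hne, hvR'⟩

lemma mem_of_mem_nablaIn (h : v ∈ nablaIn 𝓡 M R) : v ∈ R := by
  rcases Finset.mem_union.1 h with h | h
  exacts [Finset.mem_of_mem_filter v h, Finset.mem_of_mem_inter_right h]

lemma mem_nablaIn_of_mem_biUnion (hvR : v ∈ R) (hv : v ∈ 𝓡.biUnion (nablaIn 𝓡 M)) :
    v ∈ nablaIn 𝓡 M R := by
  obtain ⟨R', hR', hv'⟩ := Finset.mem_biUnion.1 hv
  rcases Finset.mem_union.1 hv' with hbdry | hmarked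
  · obtain ⟨hvR', R₃, hR₃, hne₃, hvR₃⟩ := Finset.mem_filter.1 hbdry
    refine Finset.mem_union_left _ ?_
    by_cases hR'R : R' = R
    · exact mem_bdryIn_of_mem_of_ne hR₃ (hR'R ▸ hne₃) hvR hvR₃
    · exact mem_bdryIn_of_mem_of_ne hR' hR'R hvR hvR'
  · exact Finset.mem_union_right _ (Finset.mem_inter.2 ⟨(Finset.mem_inter.1 hmarked).1, hvR⟩)

variable {G A : SimpleGraph U} {w wA : Sym2 U → ℝ} {c : ℝ≥0∞}

lemma wdist_le_mul_wdist_restrictTo_add_weight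
    (hedge : ∀ ⦃u v⦄, G.Adj u v → ∃ R ∈ 𝓡, u ∈ R ∧ v ∈ R)
    (hb : ∀ R ∈ 𝓡, ∀ u ∈ nablaIn 𝓡 M R, ∀ v ∈ nablaIn 𝓡 M R,
      wdist A wA u v ≤ c * wdist (G.restrictTo R) w u v)
    {x y t : U} (ht : t ∈ 𝓡.biUnion (nablaIn 𝓡 M)) (q : G.Walk y t)
    (hR : R ∈ 𝓡) (hx : x ∈ nablaIn 𝓡 M R) (hyR : y ∈ R) :
    wdist A wA x t ≤ c * (wdist (G.restrictTo R) w x y + q.weight w) := by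
  induction q generalizing R x with
  | nil => simpa using hb R hR x hx _ (mem_nablaIn_of_mem_biUnion hyR ht)
  | @cons y z t hyz q ih =>
    rw [Walk.weight_cons, ← add_assoc]
    by_cases hzR : z ∈ R
    · calc wdist A wA x t ≤ c * (wdist (G.restrictTo R) w x z + q.weight w) := ih ht hR hx hzR
        _ ≤ c * (wdist (G.restrictTo R) w x y + ENNReal.ofReal (w s(y, z)) + q.weight w) := by
          gcongr
          exact (wdist_triangle x y z).trans
            (add_le_add_right (wdist_le_of_adj (G := G.restrictTo R) ⟨hyz, hyR, hzR⟩) _)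
    · -- the walk leaves `R` through `y`, which therefore lies on the boundary of two regions
      obtain ⟨R₂, hR₂, hyR₂, hzR₂⟩ := hedge hyz
      have hne : R₂ ≠ R := by rintro rfl; exact hzR hzR₂
      have hy : y ∈ nablaIn 𝓡 M R :=
        Finset.mem_union_left _ (mem_bdryIn_of_mem_of_ne hR₂ hne hyR hyR₂)
      have hy₂ : y ∈ nablaIn 𝓡 M R₂ :=
        Finset.mem_union_left _ (mem_bdryIn_of_mem_of_ne hR hne.symm hyR₂ hyR)
      calc wdist A wA x t ≤ wdist A wA x y + wdist A wA y t := wdist_triangle x y t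
        _ ≤ c * wdist (G.restrictTo R) w x y +
              c * (wdist (G.restrictTo R₂) w y z + q.weight w) :=
          add_le_add (hb R hR x hx y hy) (ih ht hR₂ hy₂ hzR₂)
        _ ≤ c * (wdist (G.restrictTo R) w x y + ENNReal.ofReal (w s(y, z)) + q.weight w) := by
          rw [add_assoc, mul_add c (wdist (G.restrictTo R) w x y)]
          gcongr
          exact wdist_le_of_adj (G := G.restrictTo R₂) ⟨hyz, hyR₂, hzR₂⟩

end Regions

theorem spanner_of_regions_general {U : Type} [DecidableEq U]
    (G : FinGraph U) (w : Sym2 U → ℝ)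
    (𝓡 : Finset (Finset U))
    (hedge : ∀ ⦃u v⦄, G.G.Adj u v → ∃ R ∈ 𝓡, u ∈ R ∧ v ∈ R)
    (M : Finset U)
    (A : FinGraph U) (wA : Sym2 U → ℝ)
    (hAverts : A.verts = 𝓡.biUnion fun R => bdryIn 𝓡 R ∪ (M ∩ R))
    (ha : ∀ ⦃u v⦄, A.G.Adj u v →
      (∃ R ∈ 𝓡, u ∈ bdryIn 𝓡 R ∪ (M ∩ R) ∧ v ∈ bdryIn 𝓡 R ∪ (M ∩ R)) ∧
        wdist G.G w u v ≤ ENNReal.ofReal (wA s(u, v)))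
    (c : ℝ) (hc : 1 ≤ c)
    (hb : ∀ R ∈ 𝓡, ∀ u ∈ bdryIn 𝓡 R ∪ (M ∩ R), ∀ v ∈ bdryIn 𝓡 R ∪ (M ∩ R),
      wdist A.G wA u v ≤ ENNReal.ofReal c * wdist (G.G.restrictTo R) w u v)
    (s t : U) (hs : s ∈ A.verts) (ht : t ∈ A.verts) :
    wdist G.G w s t ≤ wdist A.G wA s t ∧
      wdist A.G wA s t ≤ ENNReal.ofReal c * wdist G.G w s t := by
  refine ⟨wdist_le_wdist_of_forall_adj (fun u v h => (ha h).2) s t, ?_⟩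
  rw [hAverts] at hs ht
  obtain ⟨R, hR, hsR⟩ := Finset.mem_biUnion.1 hs
  have hc₀ : ENNReal.ofReal c ≠ 0 := (ENNReal.ofReal_pos.2 (by linarith)).ne'
  refine le_mul_wdist_of_forall_walk hc₀ ENNReal.ofReal_ne_top fun p => ?_
  simpa using wdist_le_mul_wdist_restrictTo_add_weight hedge hb ht p hR hsR
    (mem_of_mem_nablaIn hsR)

/-- if `A` is a graph on `⋃_R ∇(R)` whose edges lie within some `∇(R)`
and overestimate `d_G`, and which is a `c`-spanner of `d_{G[R]}` on each `∇(R)`, then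
`d_G(s,t) ≤ d_A(s,t) ≤ c·d_G(s,t)` for all `s, t ∈ ⋃_R ∇(R)`. -/
theorem spanner_of_regions {U : Type} [DecidableEq U]
    (G : FinGraph U) (w : Sym2 U → ℝ) (hw : ∀ e, 0 ≤ w e)
    (𝓡 : Finset (Finset U))
    (hsub : ∀ R ∈ 𝓡, R ⊆ G.verts)
    (hcover : ∀ v ∈ G.verts, ∃ R ∈ 𝓡, v ∈ R)
    (hedge : ∀ ⦃u v⦄, G.G.Adj u v → ∃ R ∈ 𝓡, u ∈ R ∧ v ∈ R)
    (M : Finset U) (hM : M ⊆ G.verts)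
    (A : FinGraph U) (wA : Sym2 U → ℝ) (hwA : ∀ e, 0 ≤ wA e)
    (hAverts : A.verts = 𝓡.biUnion fun R => bdryIn 𝓡 R ∪ (M ∩ R))
    (ha : ∀ ⦃u v⦄, A.G.Adj u v →
      (∃ R ∈ 𝓡, u ∈ bdryIn 𝓡 R ∪ (M ∩ R) ∧ v ∈ bdryIn 𝓡 R ∪ (M ∩ R)) ∧
        wdist G.G w u v ≤ ENNReal.ofReal (wA s(u, v)))
    (c : ℝ) (hc : 1 ≤ c)
    (hb : ∀ R ∈ 𝓡, ∀ u ∈ bdryIn 𝓡 R ∪ (M ∩ R), ∀ v ∈ bdryIn 𝓡 R ∪ (M ∩ R),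
      wdist A.G wA u v ≤ ENNReal.ofReal c * wdist (G.G.restrictTo R) w u v)
    (s t : U) (hs : s ∈ A.verts) (ht : t ∈ A.verts) :
    wdist G.G w s t ≤ wdist A.G wA s t ∧
      wdist A.G wA s t ≤ ENNReal.ofReal c * wdist G.G w s t :=
  spanner_of_regions_general G w 𝓡 hedge M A wA hAverts ha c hc hb s t hs ht
end
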